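/- arXiv:math/0311004 — 2 statements merged into one kernel-verified Lean document; each statement's English description precedes it below -/
import Mathlib

section
/- For any n-point configuration p_1,...,p_n ∈ ℝ^m, there exists a neighborhood U of (p_1,...,p_n) in (ℝ^m)^n such that every configuration (q_1,...,q_n) ∈ U having the same distribution of pairwise distances as (p_1,...,p_n) is obtained from (p_1,...,p_n) by a rigid motion composed with a relabeling of the points. -/
/-!
The distances of `p` take finitely many values, so for `q` close enough to `p` each
`dist (q i) (q j)` lies nearer to `dist (p i) (p j)` than to any other value of the
distribution of `p`. If moreover the two distributions agree, every labelled distance is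
preserved, so the relabeling can be taken to be the identity. Configurations with equal
labelled distances have, by polarization, equal Gram matrices of the vectors `p i - p i₀`,
and a family is determined by its Gram matrix up to a linear isometry.
-/

/-- The distribution of pairwise distances of an `n`-point configuration:
the multiset of distances over all unordered pairs of distinct indices. -/
noncomputable def distDistribution {m n : ℕ} (p : Fin n → EuclideanSpace ℝ (Fin m)) : Multiset ℝ :=
  (((Finset.univ : Finset (Sym2 (Fin n))).filter fun z => ¬ z.IsDiag).val).map
    (Sym2.lift ⟨fun i j => dist (p i) (p j), fun _ _ => dist_comm _ _⟩)

open Filter Topology RealInnerProductSpace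

lemma LinearIsometry.exists_orthogonal_mulVec_eq {n : Type*} [Fintype n] [DecidableEq n]
    (f : EuclideanSpace ℝ n →ₗᵢ[ℝ] EuclideanSpace ℝ n) :
    ∃ M : Matrix n n ℝ, M ∈ Matrix.orthogonalGroup n ℝ ∧
      ∀ x : EuclideanSpace ℝ n, (WithLp.equiv 2 (n → ℝ)).symm (M.mulVec x) = f x := by
  set b := EuclideanSpace.basisFun n ℝ
  exact ⟨LinearMap.toMatrix b.toBasis b.toBasis f.toLinearMap,
    (f.toLinearIsometryEquiv rfl).toMatrix_mem_unitaryGroup b b,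
    LinearMap.congr_fun (Matrix.toLin_toMatrix b.toBasis b.toBasis f.toLinearMap)⟩

section Congruence

variable {ι E : Type*} [Fintype ι] [NormedAddCommGroup E] [InnerProductSpace ℝ E]

lemma norm_sum_smul_eq_of_inner_eq {v w : ι → E} (h : ∀ i j, ⟪w i, w j⟫ = ⟪v i, v j⟫)
    (c : ι → ℝ) : ‖∑ i, c i • w i‖ = ‖∑ i, c i • v i‖ := by
  have hsq : ⟪∑ i, c i • w i, ∑ i, c i • w i⟫ = ⟪∑ i, c i • v i, ∑ i, c i • v i⟫ := by
    simp only [sum_inner, inner_sum, real_inner_smul_left, real_inner_smul_right, h]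
  rw [norm_eq_sqrt_real_inner, norm_eq_sqrt_real_inner, hsq]

lemma exists_linearIsometry_apply_eq_of_inner_eq [FiniteDimensional ℝ E] {v w : ι → E}
    (h : ∀ i j, ⟪w i, w j⟫ = ⟪v i, v j⟫) : ∃ f : E →ₗᵢ[ℝ] E, ∀ i, f (v i) = w i := by
  classical
  -- `∑ cᵢ vᵢ ↦ ∑ cᵢ wᵢ` is a well-defined isometry on the span of `v`; extend it to `E`.
  set L := Fintype.linearCombination ℝ v
  set L' := Fintype.linearCombination ℝ w
  have hnorm : ∀ c, ‖L' c‖ = ‖L c‖ := fun c => by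
    simpa [L, L', Fintype.linearCombination_apply] using norm_sum_smul_eq_of_inner_eq h c
  have hker : LinearMap.ker L ≤ LinearMap.ker L' := fun c hc => by
    rw [LinearMap.mem_ker, ← norm_eq_zero, hnorm, norm_eq_zero, ← LinearMap.mem_ker]
    exact hc
  set g : LinearMap.range L →ₗ[ℝ] E :=
    (LinearMap.ker L).liftQ L' hker ∘ₗ L.quotKerEquivRange.symm.toLinearMap
  have hg : ∀ c, g ⟨L c, LinearMap.mem_range_self L c⟩ = L' c := fun c => by
    simp [g, LinearMap.quotKerEquivRange_symm_apply_image]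
  have hg_norm : ∀ s, ‖g s‖ = ‖s‖ := by
    rintro ⟨-, c, rfl⟩
    rw [hg, hnorm]
    rfl
  let gI : LinearMap.range L →ₗᵢ[ℝ] E := ⟨g, hg_norm⟩
  refine ⟨gI.extend, fun i => ?_⟩
  have hv : L (Pi.single i 1) = v i := by simp [L]
  have hw : L' (Pi.single i 1) = w i := by simp [L']
  calc gI.extend (v i) = gI.extend (L (Pi.single i 1)) := by rw [hv]
    _ = gI ⟨L (Pi.single i 1), LinearMap.mem_range_self L _⟩ :=
      gI.extend_apply ⟨L (Pi.single i 1), LinearMap.mem_range_self L _⟩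
    _ = w i := by rw [← hw]; exact hg _

lemma exists_linearIsometry_add_eq_of_dist_eq [FiniteDimensional ℝ E] {p q : ι → E}
    (h : ∀ i j, dist (q i) (q j) = dist (p i) (p j)) :
    ∃ (f : E →ₗᵢ[ℝ] E) (T : E), ∀ i, f (p i) + T = q i := by
  cases isEmpty_or_nonempty ι with
  | inl _ => exact ⟨LinearIsometry.id, 0, isEmptyElim⟩
  | inr hι =>
    obtain ⟨i₀⟩ := hι
    have hgram : ∀ i j, ⟪q i - q i₀, q j - q i₀⟫ = ⟪p i - p i₀, p j - p i₀⟫ := fun i j => by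
      simp only [real_inner_eq_norm_mul_self_add_norm_mul_self_sub_norm_sub_mul_self_div_two,
        sub_sub_sub_cancel_right, ← dist_eq_norm, h]
    obtain ⟨f, hf⟩ := exists_linearIsometry_apply_eq_of_inner_eq hgram
    refine ⟨f, q i₀ - f (p i₀), fun i => ?_⟩
    calc f (p i) + (q i₀ - f (p i₀)) = f (p i) - f (p i₀) + q i₀ := by abel
      _ = q i := by rw [← map_sub, hf i, sub_add_cancel]

end Congruence

lemma mem_distDistribution {m n : ℕ} {p : Fin n → EuclideanSpace ℝ (Fin m)} {d : ℝ} :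
    d ∈ distDistribution p ↔ ∃ i j, i ≠ j ∧ dist (p i) (p j) = d := by
  simp [distDistribution, Sym2.exists]

lemma eventually_forall_dist_ne {ι X : Type*} [Finite ι] [PseudoMetricSpace X] (p : ι → X) :
    ∀ᶠ q in 𝓝 p, ∀ i j a b,
      dist (p a) (p b) ≠ dist (p i) (p j) → dist (q i) (q j) ≠ dist (p a) (p b) := by
  simp only [eventually_all]
  intro i j a b hne
  exact ((continuous_apply i).dist (continuous_apply j)).continuousAt.eventually_ne hne.symm

lemma eventually_dist_eq_of_distDistribution_eq {m n : ℕ}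
    (p : Fin n → EuclideanSpace ℝ (Fin m)) :
    ∀ᶠ q in 𝓝 p, distDistribution q = distDistribution p →
      ∀ i j, dist (q i) (q j) = dist (p i) (p j) := by
  filter_upwards [eventually_forall_dist_ne p] with q hq hdist i j
  obtain rfl | hij := eq_or_ne i j
  · simp
  obtain ⟨a, b, -, hab⟩ :=
    mem_distDistribution.1 (hdist ▸ mem_distDistribution.2 ⟨i, j, hij, rfl⟩)
  by_contra hne
  exact hq i j a b (by rwa [hab]) hab.symm

theorem stmt_7 (m n : ℕ) (p : Fin n → EuclideanSpace ℝ (Fin m)) :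
    ∃ U ∈ nhds p, ∀ q ∈ U, distDistribution q = distDistribution p →
      ∃ M : Matrix (Fin m) (Fin m) ℝ, M ∈ Matrix.orthogonalGroup (Fin m) ℝ ∧
        ∃ T : EuclideanSpace ℝ (Fin m), ∃ π : Equiv.Perm (Fin n),
          ∀ i, (WithLp.equiv 2 (Fin m → ℝ)).symm (M.mulVec (p i)) + T = q (π i) := by
  refine ⟨_, eventually_dist_eq_of_distDistribution_eq p, fun q hq hdist => ?_⟩
  obtain ⟨f, T, hfT⟩ := exists_linearIsometry_add_eq_of_dist_eq (hq hdist)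
  obtain ⟨M, hM, hMf⟩ := f.exists_orthogonal_mulVec_eq
  exact ⟨M, hM, T, Equiv.refl _, fun i => by rw [hMf]; exact hfT i⟩
end

section
/- Let n ≥ 4 and let p_1,...,p_n ∈ ℝ² be reconstructible from distances. Suppose the multiset { I(p_{i_1},p_{i_2},p_{i_3},p_{i_4}) : i_1 < i_2 < i_3 < i_4 } is not equal to the multiset of its negatives. Let q_1,...,q_n ∈ ℝ². Then the configurations p and q have both the same distribution of distances and the same distribution of I-values if and only if there is a rotation R ∈ SO(2), a translation T ∈ ℝ², and a permutation π of {1,...,n} with R p_i + T = q_{π(i)} for all i. -/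
/-- The signed area of the parallelogram spanned by `x - z` and `y - z` in `ℝ²`. -/
def sarea (x y z : Fin 2 → ℝ) : ℝ :=
  (x 0 - z 0) * (y 1 - z 1) - (x 1 - z 1) * (y 0 - z 0)

/-- The `SE(2) × S₄`-invariant `I` built from signed areas. -/
def Ifun (q₁ q₂ q₃ q₄ : Fin 2 → ℝ) : ℝ :=
  (sarea q₁ q₂ q₄ ^ 2 - sarea q₁ q₃ q₄ ^ 2) *
  (sarea q₁ q₂ q₃ ^ 2 - sarea q₁ q₃ q₄ ^ 2) *
  (sarea q₁ q₂ q₃ ^ 2 - sarea q₁ q₂ q₄ ^ 2) *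
  (sarea q₁ q₂ q₃ - sarea q₁ q₂ q₄ + 2 * sarea q₁ q₃ q₄) *
  (sarea q₁ q₂ q₃ - 2 * sarea q₁ q₂ q₄ + sarea q₁ q₃ q₄) *
  (2 * sarea q₁ q₂ q₃ - sarea q₁ q₂ q₄ + sarea q₁ q₃ q₄)

/-- The distribution of squared pairwise distances of an `n`-point configuration. -/
noncomputable def sqDistDistribution {n : ℕ} (p : Fin n → EuclideanSpace ℝ (Fin 2)) :
    Multiset ℝ :=
  (((Finset.univ : Finset (Sym2 (Fin n))).filter fun z => ¬ z.IsDiag).val).map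
    (Sym2.lift ⟨fun i j => dist (p i) (p j) ^ 2, fun _ _ => by simp [dist_comm]⟩)

/-- The distribution of the values of `I` over all quadruples `i₁ < i₂ < i₃ < i₄`. -/
noncomputable def IDistribution {n : ℕ} (p : Fin n → EuclideanSpace ℝ (Fin 2)) :
    Multiset ℝ :=
  (((Finset.univ : Finset (Fin n × Fin n × Fin n × Fin n)).filter
      fun t => t.1 < t.2.1 ∧ t.2.1 < t.2.2.1 ∧ t.2.2.1 < t.2.2.2).val).map
    fun t => Ifun (p t.1) (p t.2.1) (p t.2.2.1) (p t.2.2.2)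

/-- An `n`-point configuration in `ℝ²` is reconstructible from distances if any
configuration with the same distribution of distances agrees with it up to a rigid
motion and a relabeling of the points. -/
def ReconstructibleFromDistances {n : ℕ} (p : Fin n → EuclideanSpace ℝ (Fin 2)) : Prop :=
  ∀ q : Fin n → EuclideanSpace ℝ (Fin 2), sqDistDistribution q = sqDistDistribution p →
    ∃ M : Matrix (Fin 2) (Fin 2) ℝ, M ∈ Matrix.orthogonalGroup (Fin 2) ℝ ∧
      ∃ T : EuclideanSpace ℝ (Fin 2), ∃ π : Equiv.Perm (Fin n),
        ∀ i, (WithLp.equiv 2 (Fin 2 → ℝ)).symm (M.mulVec (p i)) + T = q (π i)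


/-!
Under `x ↦ M x + T` every signed area is multiplied by `det M`, and `I` is a homogeneous
polynomial of degree 9 in the three areas `a₁₂₃, a₁₂₄, a₁₃₄`; moreover `I` is symmetric in its
four arguments, so relabeling the points only permutes the 4-element subsets. Hence if `q` has
the distances of `p`, reconstructibility gives `q ∘ π = M p + T` with `M` orthogonal, and then
the `I`-distribution of `q` is that of `p` multiplied by `(det M)⁹ = ±1`. The asymmetry of the
`I`-distribution of `p` under negation rules out `det M = -1`.
-/

open Equiv Function Finset Matrix

def IfunPoly (a b c : ℝ) : ℝ :=
  (b ^ 2 - c ^ 2) * (a ^ 2 - c ^ 2) * (a ^ 2 - b ^ 2) *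
  (a - b + 2 * c) * (a - 2 * b + c) * (2 * a - b + c)

lemma IfunPoly_mul (d a b c : ℝ) :
    IfunPoly (d * a) (d * b) (d * c) = d ^ 9 * IfunPoly a b c := by
  unfold IfunPoly; ring

lemma Ifun_eq_IfunPoly (x₁ x₂ x₃ x₄ : Fin 2 → ℝ) :
    Ifun x₁ x₂ x₃ x₄ = IfunPoly (sarea x₁ x₂ x₃) (sarea x₁ x₂ x₄) (sarea x₁ x₃ x₄) := rfl

lemma sarea_swap_left (x y z : Fin 2 → ℝ) : sarea y x z = -sarea x y z := by
  unfold sarea; ring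

lemma sarea_swap_right (x y z : Fin 2 → ℝ) : sarea x z y = -sarea x y z := by
  unfold sarea; ring

lemma sarea_cocycle (x₁ x₂ x₃ x₄ : Fin 2 → ℝ) :
    sarea x₂ x₃ x₄ = sarea x₁ x₂ x₃ - sarea x₁ x₂ x₄ + sarea x₁ x₃ x₄ := by
  unfold sarea; ring

lemma Ifun_swap₁₂ (x₁ x₂ x₃ x₄ : Fin 2 → ℝ) : Ifun x₂ x₁ x₃ x₄ = Ifun x₁ x₂ x₃ x₄ := by
  rw [Ifun_eq_IfunPoly, Ifun_eq_IfunPoly, sarea_swap_left x₁ x₂ x₃, sarea_swap_left x₁ x₂ x₄,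
    sarea_cocycle x₁ x₂ x₃ x₄]
  unfold IfunPoly; ring

lemma Ifun_swap₂₃ (x₁ x₂ x₃ x₄ : Fin 2 → ℝ) : Ifun x₁ x₃ x₂ x₄ = Ifun x₁ x₂ x₃ x₄ := by
  rw [Ifun_eq_IfunPoly, Ifun_eq_IfunPoly, sarea_swap_right x₁ x₂ x₃]
  unfold IfunPoly; ring

lemma Ifun_swap₃₄ (x₁ x₂ x₃ x₄ : Fin 2 → ℝ) : Ifun x₁ x₂ x₄ x₃ = Ifun x₁ x₂ x₃ x₄ := by
  rw [Ifun_eq_IfunPoly, Ifun_eq_IfunPoly, sarea_swap_right x₁ x₄ x₃]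
  unfold IfunPoly; ring

lemma Ifun_comp_perm (σ : Perm (Fin 4)) (x : Fin 4 → Fin 2 → ℝ) :
    Ifun (x (σ 0)) (x (σ 1)) (x (σ 2)) (x (σ 3)) = Ifun (x 0) (x 1) (x 2) (x 3) := by
  have hσ : σ ∈ Submonoid.closure (Set.range fun i : Fin 3 ↦ swap i.castSucc i.succ) := by
    rw [Perm.mclosure_swap_castSucc_succ]; trivial
  induction hσ using Submonoid.closure_induction generalizing x with
  | mem _ h =>
    obtain ⟨i, rfl⟩ := h
    fin_cases i
    exacts [Ifun_swap₁₂ .., Ifun_swap₂₃ .., Ifun_swap₃₄ ..]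
  | one => rfl
  | mul σ τ _ _ hσ hτ => exact (hτ (x ∘ σ)).trans (hσ x)

section AffineApply

variable {ι : Type*} [Fintype ι]

def affineApply (M : Matrix ι ι ℝ) (T x : EuclideanSpace ℝ ι) : EuclideanSpace ℝ ι :=
  (WithLp.equiv 2 (ι → ℝ)).symm (M *ᵥ x) + T

variable [DecidableEq ι] {M : Matrix ι ι ℝ}

lemma det_eq_one_or_neg_one_of_mem_orthogonalGroup (hM : M ∈ orthogonalGroup ι ℝ) :
    M.det = 1 ∨ M.det = -1 :=
  Unitary.mem_iff_eq_one_or_eq_neg_one.mp (det_of_mem_unitary hM)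

lemma norm_toLp_mulVec_of_mem_orthogonalGroup (hM : M ∈ orthogonalGroup ι ℝ)
    (v : EuclideanSpace ℝ ι) : ‖WithLp.toLp 2 (M *ᵥ v)‖ = ‖v‖ := by
  have h : Mᵀ * M = 1 := (mem_orthogonalGroup_iff' ι ℝ).1 hM
  rw [← sq_eq_sq₀ (norm_nonneg _) (norm_nonneg _), ← real_inner_self_eq_norm_sq,
    ← real_inner_self_eq_norm_sq, EuclideanSpace.inner_eq_star_dotProduct,
    EuclideanSpace.inner_eq_star_dotProduct]
  simp [dotProduct_mulVec, vecMul_mulVec, h]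

lemma dist_affineApply (hM : M ∈ orthogonalGroup ι ℝ) (T x y : EuclideanSpace ℝ ι) :
    dist (affineApply M T x) (affineApply M T y) = dist x y := by
  rw [dist_eq_norm, dist_eq_norm, affineApply, affineApply, add_sub_add_right_eq_sub,
    WithLp.equiv_symm_apply, ← WithLp.toLp_sub, ← mulVec_sub]
  exact norm_toLp_mulVec_of_mem_orthogonalGroup hM (x - y)

end AffineApply

lemma sarea_affineApply (M : Matrix (Fin 2) (Fin 2) ℝ) (T x y z : EuclideanSpace ℝ (Fin 2)) :
    sarea (affineApply M T x) (affineApply M T y) (affineApply M T z) = M.det * sarea x y z := by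
  simp [sarea, affineApply, det_fin_two]
  ring

lemma Ifun_affineApply (M : Matrix (Fin 2) (Fin 2) ℝ) (T x₁ x₂ x₃ x₄ : EuclideanSpace ℝ (Fin 2)) :
    Ifun (affineApply M T x₁) (affineApply M T x₂) (affineApply M T x₃) (affineApply M T x₄) =
      M.det ^ 9 * Ifun x₁ x₂ x₃ x₄ := by
  simp only [Ifun_eq_IfunPoly, sarea_affineApply, IfunPoly_mul]

section SubsetValues

variable {ι α β : Type*} {k : ℕ}

lemma exists_perm_comp_eq_of_range_eq {e e' : Fin k → ι} (he : Injective e)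
    (he' : Injective e') (h : Set.range e = Set.range e') : ∃ τ : Perm (Fin k), e ∘ τ = e' :=
  ⟨(ofInjective e' he').trans ((setCongr h.symm).trans (ofInjective e he).symm),
    funext fun i => by simp [apply_ofInjective_symm]⟩

lemma apply_comp_eq_of_range_eq {F : (Fin k → α) → β}
    (hF : ∀ (τ : Perm (Fin k)) y, F (y ∘ τ) = F y) (x : ι → α) {e e' : Fin k → ι}
    (he : Injective e) (he' : Injective e') (h : Set.range e = Set.range e') :
    F (x ∘ e) = F (x ∘ e') := by
  obtain ⟨τ, rfl⟩ := exists_perm_comp_eq_of_range_eq he he' h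
  exact (hF τ (x ∘ e)).symm

variable [LinearOrder ι]

lemma strictMono_vec₄ {a b c d : ι} (h : a < b ∧ b < c ∧ c < d) : StrictMono ![a, b, c, d] := by
  rw [Fin.strictMono_iff_lt_succ]
  intro i
  fin_cases i
  exacts [h.1, h.2.1, h.2.2]

variable [Fintype ι]

noncomputable def subsetValues (F : (Fin k → α) → β) (x : ι → α) : Multiset β :=
  (univ : Finset (Set.powersetCard ι k)).val.map
    fun s => F (x ∘ Set.powersetCard.ofFinEmbEquiv.symm s)

lemma subsetValues_comp_perm {F : (Fin k → α) → β}
    (hF : ∀ (τ : Perm (Fin k)) y, F (y ∘ τ) = F y) (x : ι → α) (σ : Perm ι) :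
    subsetValues F (x ∘ σ) = subsetValues F x := by
  unfold subsetValues
  conv_rhs => rw [← Multiset.map_univ_val_equiv (MulAction.toPerm σ), Multiset.map_map]
  refine Multiset.map_congr rfl fun s _ => ?_
  simp only [Function.comp_apply, MulAction.toPerm_apply]
  rw [comp_assoc]
  refine apply_comp_eq_of_range_eq hF x
    (σ.injective.comp (Set.powersetCard.ofFinEmbEquiv.symm _).injective)
    (Set.powersetCard.ofFinEmbEquiv.symm _).injective ?_
  ext i
  simp only [Set.range_comp, Set.mem_image,
    Set.powersetCard.mem_range_ofFinEmbEquiv_symm_iff_mem, ← Set.powersetCard.mem_coe_iff,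
    Set.powersetCard.coe_smul, Finset.mem_smul_finset, Perm.smul_def]

lemma map_increasingQuadruples_eq_subsetValues (F : (Fin 4 → α) → β) (x : ι → α) :
    ((univ : Finset (ι × ι × ι × ι)).filter
        fun t => t.1 < t.2.1 ∧ t.2.1 < t.2.2.1 ∧ t.2.2.1 < t.2.2.2).val.map
      (fun t => F (x ∘ ![t.1, t.2.1, t.2.2.1, t.2.2.2])) = subsetValues F x := by
  open Set.powersetCard in
  refine Multiset.map_eq_map_of_bij_of_nodup _ _ (Finset.nodup _) (Finset.nodup _)
    (fun t ht => ofFinEmbEquiv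
      (OrderEmbedding.ofStrictMono _ (strictMono_vec₄ (mem_filter.1 ht).2)))
    (fun _ _ => mem_univ_val _) ?_ ?_ ?_
  · intro t _ t' _ h
    have h' := congrArg DFunLike.coe (ofFinEmbEquiv.injective h)
    simp only [OrderEmbedding.coe_ofStrictMono] at h'
    exact Prod.ext (congrFun h' 0) (Prod.ext (congrFun h' 1)
      (Prod.ext (congrFun h' 2) (congrFun h' 3)))
  · intro s _
    set e := ofFinEmbEquiv.symm s
    refine ⟨(e 0, e 1, e 2, e 3), ?_, ?_⟩
    · simp [e.lt_iff_lt]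
    · convert ofFinEmbEquiv.apply_symm_apply s using 2
      ext i
      fin_cases i <;> rfl
  · intro t _
    simp

end SubsetValues

section Distributions

variable {n : ℕ} (p : Fin n → EuclideanSpace ℝ (Fin 2))

lemma IDistribution_eq_subsetValues :
    IDistribution p = subsetValues
      (fun x : Fin 4 → EuclideanSpace ℝ (Fin 2) => Ifun (x 0) (x 1) (x 2) (x 3)) p :=
  map_increasingQuadruples_eq_subsetValues
    (fun x : Fin 4 → EuclideanSpace ℝ (Fin 2) => Ifun (x 0) (x 1) (x 2) (x 3)) p

lemma IDistribution_comp_perm (σ : Perm (Fin n)) : IDistribution (p ∘ σ) = IDistribution p := by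
  simp only [IDistribution_eq_subsetValues]
  exact subsetValues_comp_perm (fun τ x => Ifun_comp_perm τ fun i => (x i).ofLp) p σ

lemma sqDistDistribution_comp_perm (σ : Perm (Fin n)) :
    sqDistDistribution (p ∘ σ) = sqDistDistribution p := by
  refine Multiset.map_eq_map_of_bij_of_nodup _ _ (Finset.nodup _) (Finset.nodup _)
    (fun z _ => Sym2.map σ z) (fun z hz => ?_) (fun z _ z' _ h => Sym2.map.injective σ.injective h)
    (fun z hz => ⟨Sym2.map σ.symm z, ?_, ?_⟩) (fun z _ => ?_)
  · simpa [Sym2.isDiag_map σ.injective] using hz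
  · simpa [Sym2.isDiag_map σ.symm.injective] using hz
  · simp [Sym2.map_map]
  · induction z using Sym2.ind
    rfl

lemma IDistribution_affineApply (M : Matrix (Fin 2) (Fin 2) ℝ) (T : EuclideanSpace ℝ (Fin 2)) :
    IDistribution (affineApply M T ∘ p) = (IDistribution p).map (M.det ^ 9 * ·) := by
  rw [IDistribution, IDistribution, Multiset.map_map]
  exact Multiset.map_congr rfl fun t _ => Ifun_affineApply ..

lemma sqDistDistribution_affineApply {M : Matrix (Fin 2) (Fin 2) ℝ}
    (hM : M ∈ orthogonalGroup (Fin 2) ℝ) (T : EuclideanSpace ℝ (Fin 2)) :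
    sqDistDistribution (affineApply M T ∘ p) = sqDistDistribution p := by
  refine Multiset.map_congr rfl fun z _ => ?_
  induction z using Sym2.ind
  exact congrArg (· ^ 2) (dist_affineApply hM ..)

lemma distributions_of_affineApply_eq {M : Matrix (Fin 2) (Fin 2) ℝ}
    (hM : M ∈ orthogonalGroup (Fin 2) ℝ) {T : EuclideanSpace ℝ (Fin 2)}
    {q : Fin n → EuclideanSpace ℝ (Fin 2)} {π : Perm (Fin n)}
    (h : ∀ i, affineApply M T (p i) = q (π i)) :
    sqDistDistribution q = sqDistDistribution p ∧
      IDistribution q = (IDistribution p).map (M.det ^ 9 * ·) := by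
  have hq : q ∘ π = affineApply M T ∘ p := funext fun i => (h i).symm
  rw [← sqDistDistribution_comp_perm q π, ← IDistribution_comp_perm q π, hq]
  exact ⟨sqDistDistribution_affineApply p hM T, IDistribution_affineApply p M T⟩

end Distributions

theorem stmt_17_general (n : ℕ) (p : Fin n → EuclideanSpace ℝ (Fin 2))
    (hrec : ReconstructibleFromDistances p)
    (hasym : (IDistribution p).map (fun x => -x) ≠ IDistribution p)
    (q : Fin n → EuclideanSpace ℝ (Fin 2)) :
    (sqDistDistribution q = sqDistDistribution p ∧ IDistribution q = IDistribution p) ↔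
      ∃ R : Matrix (Fin 2) (Fin 2) ℝ, R ∈ Matrix.specialOrthogonalGroup (Fin 2) ℝ ∧
        ∃ T : EuclideanSpace ℝ (Fin 2), ∃ π : Equiv.Perm (Fin n),
          ∀ i, (WithLp.equiv 2 (Fin 2 → ℝ)).symm (R.mulVec (p i)) + T = q (π i) := by
  constructor
  · rintro ⟨hsq, hI⟩
    obtain ⟨M, hM, T, π, h⟩ := hrec q hsq
    refine ⟨M, mem_specialOrthogonalGroup_iff.2 ⟨hM, ?_⟩, T, π, h⟩
    refine (det_eq_one_or_neg_one_of_mem_orthogonalGroup hM).resolve_right fun hdet => hasym ?_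
    have hIq := (distributions_of_affineApply_eq p hM h).2
    rw [hdet, hI] at hIq
    exact (Multiset.map_congr rfl fun x _ => by ring).trans hIq.symm
  · rintro ⟨R, hR, T, π, h⟩
    obtain ⟨hRo, hdet⟩ := mem_specialOrthogonalGroup_iff.1 hR
    obtain ⟨hsq, hI⟩ := distributions_of_affineApply_eq p hRo h
    exact ⟨hsq, by simpa [hdet] using hI⟩

theorem stmt_17 (n : ℕ) (hn : 4 ≤ n) (p : Fin n → EuclideanSpace ℝ (Fin 2))
    (hrec : ReconstructibleFromDistances p)
    (hasym : (IDistribution p).map (fun x => -x) ≠ IDistribution p)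
    (q : Fin n → EuclideanSpace ℝ (Fin 2)) :
    (sqDistDistribution q = sqDistDistribution p ∧ IDistribution q = IDistribution p) ↔
      ∃ R : Matrix (Fin 2) (Fin 2) ℝ, R ∈ Matrix.specialOrthogonalGroup (Fin 2) ℝ ∧
        ∃ T : EuclideanSpace ℝ (Fin 2), ∃ π : Equiv.Perm (Fin n),
          ∀ i, (WithLp.equiv 2 (Fin 2 → ℝ)).symm (R.mulVec (p i)) + T = q (π i) :=
  stmt_17_general n p hrec hasym q
end
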